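/- Let A, B, C be finite-dimensional real vector spaces and D = A × B × C. A function σ : D → ℝ is called double-linear if it is linear in (b,c) for each fixed a and linear in (a,c) for each fixed b. Then the space X(D) of double-linear functions on D is linearly isomorphic to (A⊗B)* ⊕ C*, via identifying σ(a,b,c) = θ(a⊗b) + χ(c) for θ ∈ (A⊗B)*, χ ∈ C*. -/
import Mathlib

open Function Module

/-- A function on `A × B × C` is double-linear if it is linear in `(b, c)` for
each fixed `a`, and linear in `(a, c)` for each fixed `b`. -/
def IsDoubleLinear (A B C : Type*) [AddCommGroup A] [Module ℝ A]
    [AddCommGroup B] [Module ℝ B] [AddCommGroup C] [Module ℝ C]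
    (σ : A × B × C → ℝ) : Prop :=
  (∀ (a : A) (b₁ b₂ : B) (c₁ c₂ : C) (r : ℝ),
      σ (a, r • b₁ + b₂, r • c₁ + c₂) = r * σ (a, b₁, c₁) + σ (a, b₂, c₂)) ∧
  (∀ (a₁ a₂ : A) (b : B) (c₁ c₂ : C) (r : ℝ),
      σ (r • a₁ + a₂, b, r • c₁ + c₂) = r * σ (a₁, b, c₁) + σ (a₂, b, c₂))

/-- The space `X(D)` of double-linear functions on `D = A × B × C`. -/
def XD (A B C : Type*) [AddCommGroup A] [Module ℝ A]
    [AddCommGroup B] [Module ℝ B] [AddCommGroup C] [Module ℝ C] :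
    Submodule ℝ ((A × B × C) → ℝ) where
  carrier := {σ | IsDoubleLinear A B C σ}
  add_mem' := by
    rintro σ τ ⟨h1, h2⟩ ⟨g1, g2⟩
    refine ⟨fun a b₁ b₂ c₁ c₂ r => ?_, fun a₁ a₂ b c₁ c₂ r => ?_⟩
    · simp only [Pi.add_apply, h1 a b₁ b₂ c₁ c₂ r, g1 a b₁ b₂ c₁ c₂ r]; ring
    · simp only [Pi.add_apply, h2 a₁ a₂ b c₁ c₂ r, g2 a₁ a₂ b c₁ c₂ r]; ring
  zero_mem' :=
    ⟨fun _ _ _ _ _ _ => by simp, fun _ _ _ _ _ _ => by simp⟩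
  smul_mem' := by
    rintro t σ ⟨h1, h2⟩
    refine ⟨fun a b₁ b₂ c₁ c₂ r => ?_, fun a₁ a₂ b c₁ c₂ r => ?_⟩
    · simp only [Pi.smul_apply, smul_eq_mul, h1 a b₁ b₂ c₁ c₂ r]; ring
    · simp only [Pi.smul_apply, smul_eq_mul, h2 a₁ a₂ b c₁ c₂ r]; ring


section AuxDL

variable {A B C : Type*} [AddCommGroup A] [Module ℝ A]
    [AddCommGroup B] [Module ℝ B] [AddCommGroup C] [Module ℝ C]

namespace DLaux

lemma zero_mid (σ : A × B × C → ℝ) (h : IsDoubleLinear A B C σ) (a : A) :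
    σ (a, 0, 0) = 0 := by
  have := h.1 a 0 0 0 0 2
  simp only [smul_zero, add_zero] at this
  linarith

lemma zero_left (σ : A × B × C → ℝ) (h : IsDoubleLinear A B C σ) (b : B) :
    σ (0, b, 0) = 0 := by
  have := h.2 0 0 b 0 0 2
  simp only [smul_zero, add_zero] at this
  linarith

lemma decomp (σ : A × B × C → ℝ) (h : IsDoubleLinear A B C σ) (a : A) (b : B) (c : C) :
    σ (a, b, c) = σ (a, b, 0) + σ (0, 0, c) := by
  have h1 := h.1 a b 0 0 c 1
  simp only [one_smul, add_zero, zero_add, one_mul] at h1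
  have h2 := h.2 a 0 0 0 c 1
  simp only [one_smul, add_zero, zero_add, one_mul] at h2
  rw [h1, h2, zero_mid σ h a]
  ring

noncomputable def toBilin (σ : XD A B C) : A →ₗ[ℝ] B →ₗ[ℝ] ℝ :=
  LinearMap.mk₂ ℝ (fun a b => (σ : (A × B × C) → ℝ) (a, b, 0))
    (fun a₁ a₂ b => by
      have := σ.2.2 a₁ a₂ b 0 0 1
      simpa using this)
    (fun r a b => by
      have := σ.2.2 a 0 b 0 0 r
      simpa [zero_left _ σ.2] using this)
    (fun a b₁ b₂ => by
      have := σ.2.1 a b₁ b₂ 0 0 1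
      simpa using this)
    (fun r a b => by
      have h := σ.2.1 a b 0 0 0 r
      simp only [smul_zero, add_zero] at h
      rw [h, zero_mid _ σ.2 a]
      simp)

noncomputable def chi (σ : XD A B C) : C →ₗ[ℝ] ℝ where
  toFun c := (σ : (A × B × C) → ℝ) (0, 0, c)
  map_add' c₁ c₂ := by
    have := σ.2.1 0 0 0 c₁ c₂ 1
    simpa using this
  map_smul' r c := by
    have h := σ.2.1 0 0 0 c 0 r
    simp only [smul_zero, add_zero] at h
    rw [h, zero_mid _ σ.2 0]
    simp

noncomputable def F : XD A B C →ₗ[ℝ] (TensorProduct ℝ A B →ₗ[ℝ] ℝ) × (C →ₗ[ℝ] ℝ) where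
  toFun σ := (TensorProduct.lift (toBilin σ), chi σ)
  map_add' σ τ := by
    refine Prod.ext ?_ ?_
    · apply TensorProduct.ext'
      intro a b
      simp [toBilin]
    · ext c
      simp [chi]
  map_smul' r σ := by
    refine Prod.ext ?_ ?_
    · apply TensorProduct.ext'
      intro a b
      simp [toBilin]
    · ext c
      simp [chi]

noncomputable def G : (TensorProduct ℝ A B →ₗ[ℝ] ℝ) × (C →ₗ[ℝ] ℝ) →ₗ[ℝ] XD A B C where
  toFun p := ⟨fun x => p.1 (x.1 ⊗ₜ[ℝ] x.2.1) + p.2 x.2.2, by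
    constructor
    · intro a b₁ b₂ c₁ c₂ r
      simp [TensorProduct.tmul_add, TensorProduct.tmul_smul, map_add, map_smul,
        smul_eq_mul]
      ring
    · intro a₁ a₂ b c₁ c₂ r
      simp only [TensorProduct.add_tmul, ← TensorProduct.smul_tmul', map_add,
        map_smul, smul_eq_mul]
      ring⟩
  map_add' p q := by
    ext x
    simp
    ring
  map_smul' r p := by
    ext x
    simp [smul_eq_mul]
    ring

end DLaux

end AuxDL

theorem stmt4 (A B C : Type*)
    [AddCommGroup A] [Module ℝ A] [FiniteDimensional ℝ A]
    [AddCommGroup B] [Module ℝ B] [FiniteDimensional ℝ B]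
    [AddCommGroup C] [Module ℝ C] [FiniteDimensional ℝ C] :
    ∃ Φ : XD A B C ≃ₗ[ℝ] (TensorProduct ℝ A B →ₗ[ℝ] ℝ) × (C →ₗ[ℝ] ℝ),
      ∀ (σ : XD A B C) (a : A) (b : B) (c : C),
        (σ : (A × B × C) → ℝ) (a, b, c) = (Φ σ).1 (a ⊗ₜ[ℝ] b) + (Φ σ).2 c := by
  refine ⟨LinearEquiv.ofLinear DLaux.F DLaux.G ?_ ?_, ?_⟩
  · apply LinearMap.ext
    rintro ⟨θ, χ⟩
    refine Prod.ext ?_ ?_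
    · apply TensorProduct.ext'
      intro a b
      simp [DLaux.F, DLaux.G, DLaux.toBilin]
    · ext c
      simp [DLaux.F, DLaux.G, DLaux.chi]
  · apply LinearMap.ext
    intro σ
    apply Subtype.ext
    funext x
    have := DLaux.decomp (σ : (A × B × C) → ℝ) σ.2 x.1 x.2.1 x.2.2
    simp [DLaux.F, DLaux.G, DLaux.toBilin, DLaux.chi]
    exact this.symm
  · intro σ a b c
    have := DLaux.decomp (σ : (A × B × C) → ℝ) σ.2 a b c
    simp [DLaux.F, DLaux.G, DLaux.toBilin, DLaux.chi, LinearEquiv.ofLinear_apply]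
    exact this
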